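/- arXiv:2501.17064 — 2 statements merged into one kernel-verified Lean document; each statement's English description precedes it below -/
import Mathlib

section
/- Let φ, φ' be smooth near 0 with φ(0)=0, dφ(0)=0 (similarly φ'), and suppose g(z,η), f(z,η) are holomorphic on the one-sided domain Ω⁺ = {Im η > φ(z,z̄,Re η)}, smooth up to the boundary, with the identity Im g − φ'(f, f̄, Re g) = λ·(Im η − φ) holding on a full neighborhood of 0 for a smooth λ > 0 with λ(0)=1. Define, for (x,y,s,t) near 0 with z = x+iy and w = s + i(φ(z,z̄,s) + |t|²/2): F•(x,y,s,t) = (Re f(z,w), Im f(z,w), Re g(z,w), t·√(λ(z,w))). Then the pullbacks of the functions z' = X + iY and w' = S + i(φ'(X,Y,S) + |T|²/2) under F• equal f(z,w) and g(z,w) respectively; in particular they are holomorphic functions of the first integrals (z,w), hence solutions of the original structure. -/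
open scoped Topology

/-- with f, g holomorphic on the one-sided domain
Ω⁺ = {Im η > φ(z,z̄,Re η)} and smooth up to the boundary (here: smooth on a
full neighborhood U of 0), and with the developed identity
Im g − φ'(f, f̄, Re g) = λ·(Im η − φ) on U for a smooth λ > 0 with λ(0)=1,
the map F• = (X,Y,S,T) = (Re f, Im f, Re g, t√λ) (evaluated at
z = x+iy, w = s + i(φ(z,z̄,s) + |t|²/2)) pulls the first integrals
z' = X + iY and w' = S + i(φ'(X,Y,S) + |T|²/2) back to f(z,w) and g(z,w),
which are holomorphic functions of the first integrals (z,w). -/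
theorem statement13 (ν k : ℕ)
    (φ φ' : ((Fin ν → ℂ) × ℝ) → ℝ)
    (hφ : ContDiff ℝ (⊤ : ℕ∞) φ) (hφ' : ContDiff ℝ (⊤ : ℕ∞) φ')
    (f : ((Fin ν → ℂ) × ℂ) → (Fin ν → ℂ)) (g : ((Fin ν → ℂ) × ℂ) → ℂ)
    (lam : ((Fin ν → ℂ) × ℂ) → ℝ)
    (Ω : Set ((Fin ν → ℂ) × ℂ)) (hΩ : Ω = {p | φ (p.1, p.2.re) < p.2.im})
    (hfhol : DifferentiableOn ℂ f Ω) (hghol : DifferentiableOn ℂ g Ω)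
    (hfsm : ContDiff ℝ (⊤ : ℕ∞) f) (hgsm : ContDiff ℝ (⊤ : ℕ∞) g)
    (hlam : ContDiff ℝ (⊤ : ℕ∞) lam)
    (U : Set ((Fin ν → ℂ) × ℂ)) (hU : U ∈ 𝓝 (0 : (Fin ν → ℂ) × ℂ))
    (hlampos : ∀ p ∈ U, 0 < lam p) (hlam1 : lam 0 = 1)
    (hdev : ∀ p ∈ U,
      (g p).im - φ' (f p, (g p).re) = lam p * (p.2.im - φ (p.1, p.2.re))) :
    ∀ (x y : Fin ν → ℝ) (s : ℝ) (t : Fin k → ℝ)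
      (z : Fin ν → ℂ), z = (fun j => (x j : ℂ) + Complex.I * (y j : ℂ)) →
      ∀ w : ℂ, w = (s : ℂ) + Complex.I * ((φ (z, s) + (∑ i, t i ^ 2) / 2 : ℝ) : ℂ) →
      ∀ X Y : Fin ν → ℝ, X = (fun j => (f (z, w) j).re) → Y = (fun j => (f (z, w) j).im) →
      ∀ S : ℝ, S = (g (z, w)).re →
      ∀ T : Fin k → ℝ, T = (fun i => t i * Real.sqrt (lam (z, w))) →
      (z, w) ∈ U →
      ((fun j => (X j : ℂ) + Complex.I * (Y j : ℂ)) = f (z, w)) ∧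
      ((S : ℂ) + Complex.I *
          ((φ' ((fun j => (X j : ℂ) + Complex.I * (Y j : ℂ)), S) +
            (∑ i, T i ^ 2) / 2 : ℝ) : ℂ) = g (z, w)) := by
  intro x y s t z hz w hw X Y hX hY S hS T hT hmem
  have hwre : w.re = s := by simp [hw, ← Complex.ofReal_pow, ← Complex.ofReal_sum]
  have hwim : w.im = φ (z, s) + (∑ i, t i ^ 2) / 2 := by simp [hw, ← Complex.ofReal_pow, ← Complex.ofReal_sum]
  have hfst : (fun j => (X j : ℂ) + Complex.I * (Y j : ℂ)) = f (z, w) := by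
    funext j
    apply Complex.ext <;> simp [hX, hY]
  refine ⟨hfst, ?_⟩
  have hdev' := hdev (z, w) hmem
  have hlp := hlampos (z, w) hmem
  have hTsum : ∑ i, T i ^ 2 = lam (z, w) * ∑ i, t i ^ 2 := by
    rw [hT, Finset.mul_sum]
    refine Finset.sum_congr rfl fun i _ => ?_
    rw [mul_pow, Real.sq_sqrt hlp.le]
    ring
  have him : (g (z, w)).im =
      φ' ((fun j => (X j : ℂ) + Complex.I * (Y j : ℂ)), S) + (∑ i, T i ^ 2) / 2 := by
    rw [hfst, hS, hTsum]
    have := hdev'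
    simp only [hwre, hwim] at this
    linarith
  apply Complex.ext
  · simp [hS, ← Complex.ofReal_pow, ← Complex.ofReal_sum]
  · simpa [← Complex.ofReal_pow, ← Complex.ofReal_sum] using him.symm
end

section
/- Let M₁, M₂ be smooth manifolds with locally integrable structures V₁ ⊂ ℂTM₁, V₂ ⊂ ℂTM₂, and let f : M₁ → M₂ be smooth. Then df_p(V₁)_p ⊆ (V₂)_{f(p)} for all p if and only if for every smooth solution u of V₂ on an open U ⊆ M₂ (i.e., Lu = 0 for all local sections L of V₂), the pullback u∘f is a solution of V₁ on f⁻¹(U). -/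
noncomputable section

/-- The complexified differential of a complex-valued function `u` at `q`,
applied to a complexified tangent vector `v ∈ ℂ ⊗ T_qℝ^N ≅ ℂ^N`. -/
def cdiff {N : ℕ} (u : (Fin N → ℝ) → ℂ) (q : Fin N → ℝ) (v : Fin N → ℂ) : ℂ :=
  ∑ i, fderiv ℝ u q (Pi.single i 1) * v i

/-- The complexified differential (Jacobian) of a smooth map `f : ℝ^{N₁} → ℝ^{N₂}`
at `p`, acting on complexified tangent vectors. -/
def cjac {N₁ N₂ : ℕ} (f : (Fin N₁ → ℝ) → (Fin N₂ → ℝ)) (p : Fin N₁ → ℝ)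
    (v : Fin N₁ → ℂ) : Fin N₂ → ℂ :=
  fun j => ∑ i, v i * ((fderiv ℝ f p (Pi.single i 1) j : ℝ) : ℂ)


lemma fderiv_expand {N : ℕ} (L : (Fin N → ℝ) →L[ℝ] ℂ) (w : Fin N → ℝ) :
    L w = ∑ j, (w j : ℂ) * L (Pi.single j 1) := by
  conv_lhs => rw [← Finset.univ_sum_single w]
  rw [map_sum]
  refine Finset.sum_congr rfl fun j _ => ?_
  have : (Pi.single j (w j) : Fin N → ℝ) = (w j) • (Pi.single j 1 : Fin N → ℝ) := by
    rw [← Pi.single_smul, smul_eq_mul, mul_one]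
  rw [this, map_smul, Complex.real_smul]

lemma cdiff_comp {N₁ N₂ : ℕ} (f : (Fin N₁ → ℝ) → (Fin N₂ → ℝ)) (u : (Fin N₂ → ℝ) → ℂ)
    (p : Fin N₁ → ℝ) (hu : DifferentiableAt ℝ u (f p)) (hf : DifferentiableAt ℝ f p)
    (v : Fin N₁ → ℂ) :
    cdiff (u ∘ f) p v = cdiff u (f p) (cjac f p v) := by
  have hcomp : fderiv ℝ (u ∘ f) p = (fderiv ℝ u (f p)).comp (fderiv ℝ f p) :=
    fderiv_comp p hu hf
  unfold cdiff cjac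
  simp only [hcomp, ContinuousLinearMap.comp_apply]
  have : ∀ i, (fderiv ℝ u (f p)) (fderiv ℝ f p (Pi.single i 1)) =
      ∑ j, ((fderiv ℝ f p (Pi.single i 1) j : ℝ) : ℂ) * fderiv ℝ u (f p) (Pi.single j 1) :=
    fun i => fderiv_expand _ _
  simp only [this, Finset.sum_mul, Finset.mul_sum]
  rw [Finset.sum_comm]
  refine Finset.sum_congr rfl fun j _ => Finset.sum_congr rfl fun i _ => ?_
  ring

/-- for locally integrable structures V₁ on ℝ^{N₁}, V₂ on ℝ^{N₂}
(V₂ locally the common kernel of the complexified differentials of a complete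
set of smooth first integrals) and a smooth map f, one has
df_p(V₁)_p ⊆ (V₂)_{f(p)} for all p iff the pullback u∘f of every smooth
solution u of V₂ on an open U is a solution of V₁ on f⁻¹(U). -/
theorem statement15 (N₁ N₂ : ℕ)
    (V₁ : (Fin N₁ → ℝ) → Submodule ℂ (Fin N₁ → ℂ))
    (V₂ : (Fin N₂ → ℝ) → Submodule ℂ (Fin N₂ → ℂ))
    (f : (Fin N₁ → ℝ) → (Fin N₂ → ℝ)) (hf : ContDiff ℝ (⊤ : ℕ∞) f)
    (hloc : ∀ p : Fin N₂ → ℝ, ∃ U : Set (Fin N₂ → ℝ), IsOpen U ∧ p ∈ U ∧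
      ∃ (m : ℕ) (Z : Fin m → ((Fin N₂ → ℝ) → ℂ)),
        (∀ i, ContDiffOn ℝ (⊤ : ℕ∞) (Z i) U) ∧
        ∀ q ∈ U, (V₂ q : Set (Fin N₂ → ℂ)) = {v | ∀ i, cdiff (Z i) q v = 0}) :
    (∀ p, ∀ v ∈ V₁ p, cjac f p v ∈ V₂ (f p)) ↔
    (∀ U : Set (Fin N₂ → ℝ), IsOpen U →
      ∀ u : (Fin N₂ → ℝ) → ℂ, ContDiffOn ℝ (⊤ : ℕ∞) u U →
      (∀ q ∈ U, ∀ v ∈ V₂ q, cdiff u q v = 0) →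
      ∀ q ∈ f ⁻¹' U, ∀ v ∈ V₁ q, cdiff (u ∘ f) q v = 0) := by
  constructor
  · intro h U hU u hu hsol q hq v hv
    have hdu : DifferentiableAt ℝ u (f q) :=
      (hu.differentiableOn (by simp)).differentiableAt (hU.mem_nhds hq)
    rw [cdiff_comp f u q hdu (hf.differentiable (by simp) q) v]
    exact hsol (f q) hq _ (h q v hv)
  · intro h p v hv
    obtain ⟨U, hU, hpU, m, Z, hZ, hchar⟩ := hloc (f p)
    rw [← SetLike.mem_coe, hchar (f p) hpU]
    intro i
    have hsol : ∀ q ∈ U, ∀ w ∈ V₂ q, cdiff (Z i) q w = 0 := by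
      intro q hq w hw
      have := hchar q hq
      have hw' : w ∈ {v | ∀ i, cdiff (Z i) q v = 0} := this ▸ (SetLike.mem_coe.mpr hw)
      exact hw' i
    have := h U hU (Z i) (hZ i) hsol p hpU v hv
    have hdu : DifferentiableAt ℝ (Z i) (f p) :=
      ((hZ i).differentiableOn (by simp)).differentiableAt (hU.mem_nhds hpU)
    rwa [cdiff_comp f (Z i) p hdu (hf.differentiable (by simp) p) v] at this

end
end
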